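/- Let n ≥ 3 be an integer with n ≢ 2 (mod 4) and prime factorization n = p₁^{e₁} ⋯ p_s^{e_s}. Let ζ_n be a primitive n-th root of unity in the cyclotomic field ℚ(ζ_n), for each proper subset I ⊊ {1,…,s} set n_I = ∏_{i∈I} p_i^{e_i}, and define ξ_n := ∏_{I ⊊ {1,…,s}} (1 − ζ_n^{n_I})(1 − ζ_n^{−n_I}). Then (a) ξ_n is totally positive, i.e. every embedding of ℚ(ζ_n) into ℂ sends ξ_n to a positive real number, and (b) for every σ in the Galois group Gal(ℚ(ζ_n)/ℚ), the element σ(ξ_n)/ξ_n is a totally positive unit of the ring of integers of ℚ(ζ_n). -/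

import Mathlib

/-!
Under any embedding `φ`, each factor `(1 - x)(1 - x⁻¹)` with `x = ζ ^ n_I ≠ 1` becomes
`|1 - φ x|²`, because `φ x` lies on the unit circle; so `ξ` is totally positive. If `σ ζ = ζ ^ k`,
then `σ (1 - x) / (1 - x) = 1 + x + ⋯ + x ^ (k - 1)` is an algebraic integer, and likewise for
`x⁻¹`; hence `σ ξ / ξ` is integral, and so is its inverse `σ (σ⁻¹ ξ / ξ)`.
-/

/-- An element of a number field is *totally positive* if its image under every embedding into
`ℂ` is a positive real number. -/
def TotallyPositiveElt {E : Type*} [Field E] (x : E) : Prop :=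
  ∀ φ : E →+* ℂ, ∃ r : ℝ, 0 < r ∧ φ x = (r : ℂ)

theorem Nat.prod_pow_factorization_lt_of_ssubset {N : ℕ} (hN : N ≠ 0) {I : Finset ℕ}
    (hI : I ⊂ N.primeFactors) : ∏ p ∈ I, p ^ N.factorization p < N := by
  obtain ⟨q, hqN, hqI⟩ := Finset.exists_of_ssubset hI
  have hq := Nat.prime_of_mem_primeFactors hqN
  have hdvd : ∏ p ∈ I, p ^ N.factorization p ∣ N :=
    calc _ ∣ ∏ p ∈ N.primeFactors, p ^ N.factorization p :=
          Finset.prod_dvd_prod_of_subset _ _ _ hI.subset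
      _ = N := Nat.prod_factorization_pow_eq_self hN
  refine (Nat.le_of_dvd (Nat.pos_of_ne_zero hN) hdvd).lt_of_ne fun heq => ?_
  have hqdvd : q ∣ ∏ p ∈ I, p ^ N.factorization p := by
    rw [heq]
    exact Nat.dvd_of_mem_primeFactors hqN
  obtain ⟨p, hpI, hqp⟩ := (Prime.dvd_finsetProd_iff hq.prime _).mp hqdvd
  have hp := Nat.prime_of_mem_primeFactors (hI.subset hpI)
  rw [(Nat.prime_dvd_prime_iff_eq hq hp).mp (hq.dvd_of_dvd_pow hqp)] at hqI
  exact hqI hpI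

namespace TotallyPositiveElt

variable {E : Type*} [Field E]

theorem one : TotallyPositiveElt (1 : E) :=
  fun φ => ⟨1, one_pos, by simp⟩

theorem mul {x y : E} (hx : TotallyPositiveElt x) (hy : TotallyPositiveElt y) :
    TotallyPositiveElt (x * y) := fun φ => by
  obtain ⟨r, hr, hφx⟩ := hx φ
  obtain ⟨s, hs, hφy⟩ := hy φ
  exact ⟨r * s, mul_pos hr hs, by simp [hφx, hφy]⟩

theorem div {x y : E} (hx : TotallyPositiveElt x) (hy : TotallyPositiveElt y) :
    TotallyPositiveElt (x / y) := fun φ => by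
  obtain ⟨r, hr, hφx⟩ := hx φ
  obtain ⟨s, hs, hφy⟩ := hy φ
  exact ⟨r / s, div_pos hr hs, by simp [hφx, hφy]⟩

theorem prod {ι : Type*} {s : Finset ι} {f : ι → E} (hf : ∀ i ∈ s, TotallyPositiveElt (f i)) :
    TotallyPositiveElt (∏ i ∈ s, f i) :=
  Finset.prod_induction f _ (fun _ _ => mul) one hf

theorem map {x : E} (hx : TotallyPositiveElt x) (σ : E →+* E) : TotallyPositiveElt (σ x) :=
  fun φ => hx (φ.comp σ)

end TotallyPositiveElt

theorem Complex.one_sub_mul_one_sub_inv_of_norm_eq_one {w : ℂ} (hw : ‖w‖ = 1) :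
    (1 - w) * (1 - w⁻¹) = (Complex.normSq (1 - w) : ℂ) := by
  rw [Complex.inv_eq_conj hw, Complex.normSq_eq_conj_mul_self, map_sub, map_one, mul_comm]

theorem totallyPositiveElt_one_sub_mul_one_sub_inv {E : Type*} [Field E] {x : E} {n : ℕ}
    (hn : n ≠ 0) (hxn : x ^ n = 1) (hx : x ≠ 1) : TotallyPositiveElt ((1 - x) * (1 - x⁻¹)) := by
  intro φ
  have hw : ‖φ x‖ = 1 := Complex.norm_eq_one_of_pow_eq_one (by rw [← map_pow, hxn, map_one]) hn
  have hw1 : φ x ≠ 1 := by rwa [← map_one φ, φ.injective.ne_iff]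
  refine ⟨Complex.normSq (1 - φ x), Complex.normSq_pos.mpr (sub_ne_zero.mpr hw1.symm), ?_⟩
  simpa using Complex.one_sub_mul_one_sub_inv_of_norm_eq_one hw

theorem isIntegral_map_one_sub_div_one_sub {R A : Type*} [CommRing R] [Field A] [Algebra R A]
    {x : A} (hx : IsIntegral R x) (hx1 : x ≠ 1) {σ : A →+* A} {k : ℕ} (hσ : σ x = x ^ k) :
    IsIntegral R (σ (1 - x) / (1 - x)) := by
  rw [map_sub, map_one, hσ, ← geom_sum_mul_neg, mul_div_cancel_right₀ _ (sub_ne_zero.mpr hx1.symm)]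
  exact IsIntegral.sum _ fun i _ => hx.pow i

theorem isIntegral_map_one_sub_mul_one_sub_inv_div {R A : Type*} [CommRing R] [Field A]
    [Algebra R A] {x : A} (hx : IsIntegral R x) (hx' : IsIntegral R x⁻¹) (hx1 : x ≠ 1)
    {σ : A →+* A} {k : ℕ} (hσ : σ x = x ^ k) :
    IsIntegral R (σ ((1 - x) * (1 - x⁻¹)) / ((1 - x) * (1 - x⁻¹))) := by
  rw [map_mul, ← div_mul_div_comm]
  refine (isIntegral_map_one_sub_div_one_sub hx hx1 hσ).mul
    (isIntegral_map_one_sub_div_one_sub hx' (inv_ne_one.mpr hx1) (k := k) ?_)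
  rw [map_inv₀, hσ, inv_pow]

theorem cyclotomic_xi_totally_positive_general (n : ℕ+)
    (E : Type*) [Field E] [Algebra ℚ E]
    (ζ : E) (hζ : IsPrimitiveRoot ζ (n : ℕ))
    (ξ : E)
    (hξ : ξ = ∏ I ∈ (n : ℕ).primeFactors.powerset.filter (· ≠ (n : ℕ).primeFactors),
      (1 - ζ ^ (∏ p ∈ I, p ^ (n : ℕ).factorization p)) *
      (1 - ζ ^ (-((∏ p ∈ I, p ^ (n : ℕ).factorization p : ℕ) : ℤ)))) :
    TotallyPositiveElt ξ ∧
      ∀ σ : E ≃ₐ[ℚ] E,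
        IsIntegral ℤ (σ ξ / ξ) ∧ IsIntegral ℤ (σ ξ / ξ)⁻¹ ∧
          TotallyPositiveElt (σ ξ / ξ) := by
  simp only [zpow_neg, zpow_natCast] at hξ
  set T := (n : ℕ).primeFactors.powerset.filter (· ≠ (n : ℕ).primeFactors)
  have hne : ∀ I ∈ T, ζ ^ (∏ p ∈ I, p ^ (n : ℕ).factorization p) ≠ 1 := by
    intro I hI
    simp only [T, Finset.mem_filter, Finset.mem_powerset] at hI
    refine hζ.pow_ne_one_of_pos_of_lt (Finset.prod_ne_zero_iff.mpr fun p hp => ?_)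
      (Nat.prod_pow_factorization_lt_of_ssubset n.ne_zero (Finset.ssubset_iff_subset_ne.mpr hI))
    exact pow_ne_zero _ (Nat.prime_of_mem_primeFactors (hI.1 hp)).ne_zero
  have hpos : TotallyPositiveElt ξ := hξ ▸ TotallyPositiveElt.prod fun I hI =>
    totallyPositiveElt_one_sub_mul_one_sub_inv n.ne_zero
      (by rw [← pow_mul, mul_comm, pow_mul, hζ.pow_eq_one, one_pow]) (hne I hI)
  have hint : ∀ σ : E ≃ₐ[ℚ] E, IsIntegral ℤ (σ ξ / ξ) := by
    intro σ
    obtain ⟨k, -, hk⟩ : ∃ k < (n : ℕ), ζ ^ k = σ ζ :=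
      hζ.eq_pow_of_pow_eq_one (by rw [← map_pow, hζ.pow_eq_one, map_one])
    rw [hξ, map_prod, ← Finset.prod_div_distrib]
    refine IsIntegral.prod _ fun I hI =>
      isIntegral_map_one_sub_mul_one_sub_inv_div (σ := (σ : E →+* E)) (k := k)
        ((hζ.isIntegral n.pos).pow _) (inv_pow ζ _ ▸ (hζ.inv.isIntegral n.pos).pow _) (hne I hI) ?_
    rw [RingHom.coe_coe, map_pow, ← hk, pow_right_comm]
  refine ⟨hpos, fun σ => ⟨hint σ, ?_, (hpos.map (σ : E →+* E)).div hpos⟩⟩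
  have hinv : (σ ξ / ξ)⁻¹ = σ (σ.symm ξ / ξ) := by
    rw [map_div₀, σ.apply_symm_apply, inv_div]
  rw [hinv]
  exact (hint σ.symm).map (σ.toAlgHom.restrictScalars ℤ)

/-- with `n ≥ 3`, `n ≢ 2 (mod 4)`, `ζ` a primitive `n`-th root of unity in
the `n`-th cyclotomic field `E = ℚ(ζₙ)`, and
`ξ = ∏_{I ⊊ primeFactors(n)} (1 - ζ^{n_I})(1 - ζ^{-n_I})` where `n_I = ∏_{p ∈ I} p^{v_p(n)}`,
the element `ξ` is totally positive, and for every `σ ∈ Gal(E/ℚ)` the element `σ(ξ)/ξ` is a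
totally positive unit of the ring of integers of `E`. -/
theorem cyclotomic_xi_totally_positive (n : ℕ+) (hn3 : 3 ≤ (n : ℕ)) (hn4 : (n : ℕ) % 4 ≠ 2)
    (E : Type*) [Field E] [Algebra ℚ E] [IsCyclotomicExtension {(n : ℕ)} ℚ E]
    (ζ : E) (hζ : IsPrimitiveRoot ζ (n : ℕ))
    (ξ : E)
    (hξ : ξ = ∏ I ∈ (n : ℕ).primeFactors.powerset.filter (· ≠ (n : ℕ).primeFactors),
      (1 - ζ ^ (∏ p ∈ I, p ^ (n : ℕ).factorization p)) *
      (1 - ζ ^ (-((∏ p ∈ I, p ^ (n : ℕ).factorization p : ℕ) : ℤ)))) :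
    TotallyPositiveElt ξ ∧
      ∀ σ : E ≃ₐ[ℚ] E,
        IsIntegral ℤ (σ ξ / ξ) ∧ IsIntegral ℤ (σ ξ / ξ)⁻¹ ∧
          TotallyPositiveElt (σ ξ / ξ) :=
  cyclotomic_xi_totally_positive_general n E ζ hζ ξ hξ
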